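/- (Proposition 1) The measure on [0,1] with density ρ⁽¹⁾ with respect to Lebesgue measure, where ρ⁽¹⁾(x) = 4/3 for x ∈ [0, 1/2) and ρ⁽¹⁾(x) = 2/3 for x ∈ [1/2, 1], is an invariant probability measure for the map φ₁; that is, the pushforward of this measure under φ₁ equals the measure itself. -/

import Mathlib

/-!
Every branch of `φ_k` is affine: it maps `[1/2, 1)` onto `[0, 2^(-k))` with slope `2^(1-k)` and
each dyadic interval `[2^m, 2^(m+1))`, `m ≤ -2`, onto `[0, 1)` with slope `2^(-m)`. An affine map
of slope `c` pushes Lebesgue measure on its domain to `c⁻¹` times Lebesgue measure on its image.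
For `k = 1`, summing over the branches, the pushforward of `μ₁ = (4/3) λ|[0,1/2) + (2/3) λ|[1/2,1)`
is `(4/3) (∑_{m ≤ -2} 2^m) λ|[0,1) + (2/3) λ|[0,1/2) = (2/3) λ|[0,1) + (2/3) λ|[0,1/2)`,
which is `μ₁` again.
-/

open MeasureTheory

/-- The infinitely piecewise linear map `φ_k` on `[0,1]`:
`φ_k(x) = 2^(1-k) (x - 1/2)` for `x ∈ [1/2, 1]`,
`φ_k(x) = 2^i (x - 2^(-i))` for `x ∈ [2^(-i), 2^(1-i))`, `i ≥ 2`, and `φ_k(0) = 0`. -/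
noncomputable def phi (k : ℕ) (x : ℝ) : ℝ :=
  if x = 0 then 0
  else if (1 : ℝ) / 2 ≤ x then (2 : ℝ) ^ ((1 : ℤ) - k) * (x - 1 / 2)
  else (2 : ℝ) ^ (-(Int.log 2 x)) * (x - (2 : ℝ) ^ (Int.log 2 x))

/-- The density `ρ¹`: `4/3` on `[0, 1/2)` and `2/3` on `[1/2, 1]`. -/
noncomputable def rho1 (x : ℝ) : ENNReal :=
  if x < 1 / 2 then ENNReal.ofReal (4 / 3) else ENNReal.ofReal (2 / 3)

/-- The measure on `[0,1]` with density `ρ¹` with respect to Lebesgue measure. -/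
noncomputable def mu1 : Measure ℝ :=
  (volume.restrict (Set.Icc (0 : ℝ) 1)).withDensity rho1

open Set ENNReal Function

theorem Int.log_eq_iff_mem_Ico_zpow {R : Type*} [Semifield R] [LinearOrder R]
    [IsStrictOrderedRing R] [FloorSemiring R] {b : ℕ} (hb : 1 < b) {r : R} (hr : 0 < r)
    {m : ℤ} : Int.log b r = m ↔ r ∈ Ico ((b : R) ^ m) ((b : R) ^ (m + 1)) := by
  rw [mem_Ico, Int.zpow_le_iff_le_log hb hr, Int.lt_zpow_iff_log_lt hb hr]
  omega

theorem MeasureTheory.Measure.sum_smul_const {α ι : Type*} [MeasurableSpace α]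
    (c : ι → ℝ≥0∞) (μ : Measure α) : Measure.sum (fun i ↦ c i • μ) = (∑' i, c i) • μ := by
  ext s hs
  simp [Measure.sum_apply _ hs, ENNReal.tsum_mul_right]

theorem map_mul_sub_volume_restrict_Ico {c : ℝ} (hc : 0 < c) (a b : ℝ) :
    (volume.restrict (Ico a b)).map (fun x ↦ c * (x - a)) =
      ENNReal.ofReal c⁻¹ • volume.restrict (Ico 0 (c * (b - a))) := by
  have hmeas : Measurable fun x : ℝ ↦ c * (x - a) := by fun_prop
  have hpre : (fun x ↦ c * (x - a)) ⁻¹' Ico 0 (c * (b - a)) = Ico a b := by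
    ext x
    simp [mul_nonneg_iff_of_pos_left hc, mul_lt_mul_iff_right₀ hc]
  have hvol : volume.map (fun x : ℝ ↦ c * (x - a)) = ENNReal.ofReal c⁻¹ • volume := by
    change volume.map ((c * ·) ∘ (· - a)) = _
    rw [← Measure.map_map (measurable_const_mul c) (measurable_sub_const a),
      map_sub_right_eq_self, Real.map_volume_mul_left hc.ne', abs_of_pos (inv_pos.2 hc)]
  rw [← hpre, ← Measure.restrict_map hmeas measurableSet_Ico, hvol, Measure.restrict_smul]

def dyadicIco (m : ℤ) : Set ℝ := Ico (2 ^ m) (2 ^ (m + 1))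

lemma measurableSet_dyadicIco (m : ℤ) : MeasurableSet (dyadicIco m) := measurableSet_Ico

lemma pos_of_mem_dyadicIco {m : ℤ} {x : ℝ} (hx : x ∈ dyadicIco m) : 0 < x :=
  (zpow_pos two_pos m).trans_le hx.1

lemma lt_half_of_mem_dyadicIco {m : ℤ} (hm : m ≤ -2) {x : ℝ} (hx : x ∈ dyadicIco m) :
    x < 1 / 2 :=
  calc x < 2 ^ (m + 1) := hx.2
    _ ≤ (2 : ℝ) ^ (-1 : ℤ) := zpow_le_zpow_right₀ one_le_two (by omega)
    _ = 1 / 2 := by norm_num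

lemma log_two_eq_of_mem_dyadicIco {m : ℤ} {x : ℝ} (hx : x ∈ dyadicIco m) :
    Int.log 2 x = m := by
  exact_mod_cast (Int.log_eq_iff_mem_Ico_zpow one_lt_two (pos_of_mem_dyadicIco hx)).2
    (by exact_mod_cast hx)

lemma pairwise_disjoint_dyadicIco : Pairwise (Disjoint on dyadicIco) := fun _ _ hmn ↦
  disjoint_left.2 fun _ hm hn ↦
    hmn ((log_two_eq_of_mem_dyadicIco hm).symm.trans (log_two_eq_of_mem_dyadicIco hn))

lemma iUnion_dyadicIco_neg_sub_two : ⋃ n : ℕ, dyadicIco (-n - 2) = Ioo 0 (1 / 2) := by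
  ext x
  simp only [mem_iUnion, mem_Ioo]
  constructor
  · rintro ⟨n, hx⟩
    exact ⟨pos_of_mem_dyadicIco hx, lt_half_of_mem_dyadicIco (by omega) hx⟩
  · rintro ⟨hx0, hx⟩
    have hlog : Int.log 2 x < -1 :=
      (Int.lt_zpow_iff_log_lt one_lt_two hx0).1 (by norm_num [hx])
    refine ⟨(-Int.log 2 x - 2).toNat, ?_⟩
    have : Int.log 2 x = -((-Int.log 2 x - 2).toNat : ℤ) - 2 := by omega
    rw [dyadicIco, ← this]
    exact_mod_cast (Int.log_eq_iff_mem_Ico_zpow one_lt_two hx0).1 rfl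

lemma volume_restrict_Ico_zero_half :
    volume.restrict (Ico (0 : ℝ) (1 / 2)) =
      Measure.sum fun n : ℕ ↦ volume.restrict (dyadicIco (-n - 2)) := by
  rw [← Measure.restrict_congr_set Ioo_ae_eq_Ico, ← iUnion_dyadicIco_neg_sub_two,
    Measure.restrict_iUnion _ fun n ↦ measurableSet_dyadicIco _]
  exact pairwise_disjoint_dyadicIco.comp_of_injective fun i j h ↦ by simpa using h

lemma volume_restrict_Ico_zero_one : volume.restrict (Ico (0 : ℝ) 1) =
    volume.restrict (Ico 0 (1 / 2)) + volume.restrict (Ico (1 / 2) 1) := by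
  rw [← Ico_union_Ico_eq_Ico (by norm_num : (0 : ℝ) ≤ 1 / 2) (by norm_num : (1 / 2 : ℝ) ≤ 1),
    Measure.restrict_union Ico_disjoint_Ico_same measurableSet_Ico]

lemma phi_eq_of_mem_dyadicIco (k : ℕ) {m : ℤ} (hm : m ≤ -2) {x : ℝ} (hx : x ∈ dyadicIco m) :
    phi k x = 2 ^ (-m) * (x - 2 ^ m) := by
  rw [phi, if_neg (pos_of_mem_dyadicIco hx).ne', if_neg (lt_half_of_mem_dyadicIco hm hx).not_ge,
    log_two_eq_of_mem_dyadicIco hx]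

lemma phi_eq_of_half_le (k : ℕ) {x : ℝ} (hx : 1 / 2 ≤ x) :
    phi k x = 2 ^ ((1 : ℤ) - k) * (x - 1 / 2) := by
  rw [phi, if_neg (by linarith), if_pos hx]

lemma phi_ae_eq_on_dyadicIco (k : ℕ) {m : ℤ} (hm : m ≤ -2) :
    phi k =ᵐ[volume.restrict (dyadicIco m)] fun x ↦ 2 ^ (-m) * (x - 2 ^ m) :=
  ae_restrict_of_forall_mem (measurableSet_dyadicIco m) fun _ ↦ phi_eq_of_mem_dyadicIco k hm

lemma phi_ae_eq_on_Ico_half_one (k : ℕ) :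
    phi k =ᵐ[volume.restrict (Ico (1 / 2) 1)] fun x ↦ 2 ^ ((1 : ℤ) - k) * (x - 1 / 2) :=
  ae_restrict_of_forall_mem measurableSet_Ico fun _ hx ↦ phi_eq_of_half_le k hx.1

lemma aemeasurable_phi_volume_restrict_dyadicIco (k : ℕ) {m : ℤ} (hm : m ≤ -2) :
    AEMeasurable (phi k) (volume.restrict (dyadicIco m)) :=
  (by fun_prop : Measurable fun x : ℝ ↦ 2 ^ (-m) * (x - 2 ^ m)).aemeasurable.congr
    (phi_ae_eq_on_dyadicIco k hm).symm

lemma aemeasurable_phi_volume_restrict_Ico_half_one (k : ℕ) :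
    AEMeasurable (phi k) (volume.restrict (Ico (1 / 2) 1)) :=
  (by fun_prop : Measurable fun x : ℝ ↦ 2 ^ ((1 : ℤ) - k) * (x - 1 / 2)).aemeasurable.congr
    (phi_ae_eq_on_Ico_half_one k).symm

lemma aemeasurable_phi_volume_restrict_Ico_zero_half (k : ℕ) :
    AEMeasurable (phi k) (volume.restrict (Ico 0 (1 / 2))) := by
  rw [volume_restrict_Ico_zero_half]
  exact .sum_measure fun n ↦ aemeasurable_phi_volume_restrict_dyadicIco k (by omega)

lemma map_phi_volume_restrict_dyadicIco (k : ℕ) {m : ℤ} (hm : m ≤ -2) :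
    (volume.restrict (dyadicIco m)).map (phi k) =
      ENNReal.ofReal (2 ^ m) • volume.restrict (Ico 0 1) := by
  have hslope : (2 : ℝ) ^ (-m) * (2 ^ (m + 1) - 2 ^ m) = 1 := by
    rw [zpow_add_one₀ two_ne_zero, zpow_neg]
    field_simp
    ring
  rw [Measure.map_congr (phi_ae_eq_on_dyadicIco k hm), dyadicIco,
    map_mul_sub_volume_restrict_Ico (zpow_pos two_pos _), hslope, zpow_neg, inv_inv]

lemma map_phi_volume_restrict_Ico_half_one (k : ℕ) :
    (volume.restrict (Ico (1 / 2 : ℝ) 1)).map (phi k) =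
      ENNReal.ofReal (2 ^ ((k : ℤ) - 1)) • volume.restrict (Ico 0 (2 ^ (-(k : ℤ)))) := by
  have hslope : (2 : ℝ) ^ ((1 : ℤ) - k) * (1 - 1 / 2) = 2 ^ (-(k : ℤ)) := by
    rw [sub_eq_neg_add, zpow_add_one₀ two_ne_zero]
    ring
  rw [Measure.map_congr (phi_ae_eq_on_Ico_half_one k),
    map_mul_sub_volume_restrict_Ico (zpow_pos two_pos _), hslope, ← zpow_neg, neg_sub]

lemma tsum_ofReal_two_zpow_neg_sub_two :
    ∑' n : ℕ, ENNReal.ofReal (2 ^ (-(n : ℤ) - 2)) = ENNReal.ofReal (1 / 2) := by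
  have hterm (n : ℕ) : (2 : ℝ) ^ (-(n : ℤ) - 2) = 1 / 2 / 2 / 2 ^ n := by
    rw [zpow_sub₀ two_ne_zero, zpow_neg, zpow_natCast]
    field_simp
  simp_rw [hterm]
  rw [← ENNReal.ofReal_tsum_of_nonneg (fun n ↦ by positivity) (summable_geometric_two' _),
    tsum_geometric_two']

lemma map_phi_volume_restrict_Ico_zero_half (k : ℕ) :
    (volume.restrict (Ico (0 : ℝ) (1 / 2))).map (phi k) =
      ENNReal.ofReal (1 / 2) • volume.restrict (Ico 0 1) := by
  have hmeas := aemeasurable_phi_volume_restrict_Ico_zero_half k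
  rw [volume_restrict_Ico_zero_half] at hmeas ⊢
  rw [Measure.map_sum hmeas, ← tsum_ofReal_two_zpow_neg_sub_two, ← Measure.sum_smul_const]
  exact congrArg Measure.sum (funext fun n ↦ map_phi_volume_restrict_dyadicIco k (by omega))

lemma mu1_eq : mu1 = ENNReal.ofReal (4 / 3) • volume.restrict (Ico 0 (1 / 2)) +
    ENNReal.ofReal (2 / 3) • volume.restrict (Ico (1 / 2) 1) := by
  rw [mu1, ← Measure.restrict_congr_set Ico_ae_eq_Icc, volume_restrict_Ico_zero_one,
    withDensity_add_measure, ← withDensity_const, ← withDensity_const]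
  congr 1 <;>
    refine withDensity_congr_ae (ae_restrict_of_forall_mem measurableSet_Ico fun x hx ↦ ?_)
  · rw [rho1, if_pos hx.2]
  · rw [rho1, if_neg (not_lt.2 hx.1)]

instance isProbabilityMeasure_mu1 : IsProbabilityMeasure mu1 := by
  constructor
  rw [mu1_eq, Measure.add_apply, Measure.smul_apply, Measure.smul_apply,
    Measure.restrict_apply_univ, Measure.restrict_apply_univ, Real.volume_Ico, Real.volume_Ico,
    smul_eq_mul, smul_eq_mul, ← ENNReal.ofReal_mul (by norm_num),
    ← ENNReal.ofReal_mul (by norm_num), ← ENNReal.ofReal_add (by norm_num) (by norm_num)]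
  norm_num

/-- (Proposition 1) The measure with density `ρ¹(x) = 4/3` on `[0,1/2)`, `2/3` on `[1/2,1]`
is an invariant probability measure for `φ₁`. -/
theorem stmt_1 : Measure.map (phi 1) mu1 = mu1 ∧ IsProbabilityMeasure mu1 := by
  refine ⟨?_, isProbabilityMeasure_mu1⟩
  have hA := aemeasurable_phi_volume_restrict_Ico_zero_half 1
  have hB := aemeasurable_phi_volume_restrict_Ico_half_one 1
  have hhalf : (2 : ℝ) ^ (-1 : ℤ) = 1 / 2 := by norm_num
  have hprod : ENNReal.ofReal (4 / 3) * ENNReal.ofReal (1 / 2) = ENNReal.ofReal (2 / 3) := by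
    rw [← ENNReal.ofReal_mul (by norm_num)]
    norm_num
  have hsum : ENNReal.ofReal (2 / 3) + ENNReal.ofReal (2 / 3) = ENNReal.ofReal (4 / 3) := by
    rw [← ENNReal.ofReal_add (by norm_num) (by norm_num)]
    norm_num
  rw [mu1_eq, (hA.smul_measure _).map_add₀ (hB.smul_measure _), Measure.map_smul,
    Measure.map_smul, map_phi_volume_restrict_Ico_zero_half, map_phi_volume_restrict_Ico_half_one,
    Nat.cast_one, sub_self, zpow_zero, ENNReal.ofReal_one, one_smul, hhalf,
    volume_restrict_Ico_zero_one, smul_smul, hprod, smul_add, ← hsum, add_smul]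
  abel
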